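/- arXiv:1701.06478 — 4 statements merged into one kernel-verified Lean document; each statement's English description precedes it below -/
import Mathlib

section
/- Let n ≥ 1 and let c and d be two distinct codewords of the Varshamov–Tenengolts code VT(n). Then the sets of binary strings of length n−1 obtainable from c and from d by a single deletion are disjoint: D₋₁(c) ∩ D₋₁(d) = ∅. In other words, VT(n) is a single-deletion-error correcting code. -/
/-!
Reinserting the deleted bit `b` at position `p` into a string `w` of length `n - 1` raises the
checksum by `(p + 1) b + (number of ones of w after position p)`, a number in `[0, n]`. The
VT condition thus fixes this increment exactly, as the negated checksum of `w` modulo `n + 1`.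
Two insertions with the same increment must insert the same bit, and into the same run of
equal bits of `w`, so they produce the same string.
-/

/-- The checksum of a binary string `c = (c_1, …, c_n)` is `Σ_{i=1}^n i·c_i`
(1-indexed, evaluated over the integers/naturals). -/
def checksum (c : List Bool) : ℕ :=
  ∑ i ∈ Finset.range c.length, (i + 1) * (c.getD i false).toNat

/-- The Varshamov–Tenengolts code `VT(n)`: binary strings of length `n`
whose checksum is divisible by `n + 1`. -/
def VT (n : ℕ) : Set (List Bool) :=
  {c | c.length = n ∧ (n + 1) ∣ checksum c}

/-- `del1 x`: the set of strings obtainable from `x` by deleting one bit. -/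
def del1 (x : List Bool) : Set (List Bool) :=
  {w | ∃ p < x.length, w = x.take p ++ x.drop (p + 1)}

theorem List.insertIdx_eq_insertIdx_of_forall_mem_eq {α : Type*} {a : α} :
    ∀ {l : List α} {p q : ℕ}, p ≤ q → q ≤ l.length →
      (∀ x ∈ (l.drop p).take (q - p), x = a) → l.insertIdx p a = l.insertIdx q a
  | [], _, _, hpq, hq, _ => by simp at hq; congr 1; omega
  | _ :: _, 0, 0, _, _, _ => rfl
  | x :: l, 0, q + 1, _, hq, h => by
    have hx : x = a := h x (by simp)
    rw [insertIdx_zero, insertIdx_succ_cons, hx, ← insertIdx_zero]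
    exact congrArg _ <| insertIdx_eq_insertIdx_of_forall_mem_eq (Nat.zero_le q)
      (by simpa using hq) fun y hy => h y (by simp_all)
  | _ :: l, p + 1, q + 1, hpq, hq, h => by
    rw [insertIdx_succ_cons, insertIdx_succ_cons]
    exact congrArg _ <| insertIdx_eq_insertIdx_of_forall_mem_eq (by omega) (by simpa using hq)
      (by simpa using h)

theorem checksum_cons (a : Bool) (l : List Bool) :
    checksum (a :: l) = checksum l + l.count true + a.toNat := by
  have hcount : l.count true = ∑ i ∈ Finset.range l.length, (l.getD i false).toNat := by
    induction l with
    | nil => rfl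
    | cons b l ih => cases b <;> simp [Finset.sum_range_succ', ih]
  simp only [checksum, List.length_cons, Finset.sum_range_succ', List.getD_cons_succ,
    List.getD_cons_zero, hcount, ← Finset.sum_add_distrib]
  simp only [add_mul, one_mul, zero_add]

def checksumShift (w : List Bool) (p : ℕ) (b : Bool) : ℕ :=
  (p + 1) * b.toNat + (w.drop p).count true

theorem checksum_insertIdx (b : Bool) :
    ∀ {w : List Bool} {p : ℕ}, p ≤ w.length →
      checksum (w.insertIdx p b) = checksum w + checksumShift w p b
  | w, 0, _ => by
    rw [List.insertIdx_zero, checksum_cons, checksumShift, List.drop_zero]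
    ring
  | a :: w, p + 1, hp => by
    rw [List.insertIdx_succ_cons, checksum_cons, checksum_insertIdx b (by simpa using hp),
      checksum_cons, checksumShift, checksumShift, List.drop_succ_cons,
      ((List.perm_insertIdx b w (by simpa using hp)).count_eq true), List.count_cons]
    cases b <;> simp <;> ring

theorem checksumShift_lt {w : List Bool} {p : ℕ} (hp : p ≤ w.length) (b : Bool) :
    checksumShift w p b < w.length + 2 := by
  have := (w.drop p).count_le_length (a := true)
  cases b <;> simp [checksumShift] at this ⊢ <;> omega

theorem insertIdx_eq_insertIdx_of_checksumShift_eq {w : List Bool} {p q : ℕ} {b b' : Bool}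
    (hpq : p ≤ q) (hq : q ≤ w.length) (h : checksumShift w p b = checksumShift w q b') :
    w.insertIdx p b = w.insertIdx q b' := by
  set run := (w.drop p).take (q - p)
  have hcount : (w.drop p).count true = run.count true + (w.drop q).count true := by
    rw [← List.count_append, ← List.take_append_drop (q - p) (w.drop p), List.drop_drop]
    congr 3
    omega
  have hrun : run.length = q - p := by simp [run]; omega
  have hle : run.count true ≤ q - p := hrun ▸ run.count_le_length
  simp only [checksumShift, hcount] at h
  cases b <;> cases b' <;>
    simp only [Bool.toNat_false, Bool.toNat_true, mul_zero, mul_one, zero_add] at h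
  · refine List.insertIdx_eq_insertIdx_of_forall_mem_eq hpq hq fun x hx => ?_
    have : run.count true = 0 := by omega
    exact Bool.eq_false_iff.2 fun hx' => List.count_eq_zero.1 this (hx' ▸ hx)
  · omega
  · omega
  · refine List.insertIdx_eq_insertIdx_of_forall_mem_eq hpq hq fun x hx => ?_
    have : run.count true = run.length := by omega
    exact (List.count_eq_length.1 this x hx).symm

theorem insertIdx_eq_insertIdx_of_checksum_modEq {w : List Bool} {p q : ℕ} {b b' : Bool}
    (hp : p ≤ w.length) (hq : q ≤ w.length)
    (h : checksum (w.insertIdx p b) ≡ checksum (w.insertIdx q b') [MOD w.length + 2]) :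
    w.insertIdx p b = w.insertIdx q b' := by
  wlog hpq : p ≤ q generalizing p q b b'
  · exact (this hq hp h.symm (by omega)).symm
  rw [checksum_insertIdx b hp, checksum_insertIdx b' hq] at h
  exact insertIdx_eq_insertIdx_of_checksumShift_eq hpq hq <|
    (Nat.ModEq.add_left_cancel' _ h).eq_of_lt_of_lt (checksumShift_lt hp b) (checksumShift_lt hq b')

theorem exists_insertIdx_eq_of_mem_del1 {x w : List Bool} (h : w ∈ del1 x) :
    ∃ p ≤ w.length, ∃ b, x = w.insertIdx p b := by
  obtain ⟨p, hp, rfl⟩ := h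
  rw [← List.eraseIdx_eq_take_drop_succ]
  exact ⟨p, by simp [List.length_eraseIdx_of_lt hp]; omega, x[p],
    (List.insertIdx_eraseIdx_getElem hp).symm⟩

theorem vt_single_deletion_correcting_general (n : ℕ)
    (c d : List Bool) (hc : c ∈ VT n) (hd : d ∈ VT n) (hcd : c ≠ d) :
    del1 c ∩ del1 d = ∅ := by
  refine Set.eq_empty_of_forall_notMem fun w ⟨hwc, hwd⟩ => hcd ?_
  obtain ⟨p, hp, b, rfl⟩ := exists_insertIdx_eq_of_mem_del1 hwc
  obtain ⟨q, hq, b', rfl⟩ := exists_insertIdx_eq_of_mem_del1 hwd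
  have hlen : w.length + 2 = n + 1 := by
    rw [← hc.1, List.length_insertIdx_of_le_length hp]
  apply insertIdx_eq_insertIdx_of_checksum_modEq hp hq
  rw [hlen]
  exact (Nat.modEq_zero_iff_dvd.2 hc.2).trans (Nat.modEq_zero_iff_dvd.2 hd.2).symm

/-- VT(n) is a single-deletion-error correcting code: the single-deletion
balls of two distinct codewords are disjoint. -/
theorem vt_single_deletion_correcting (n : ℕ) (hn : 1 ≤ n)
    (c d : List Bool) (hc : c ∈ VT n) (hd : d ∈ VT n) (hcd : c ≠ d) :
    del1 c ∩ del1 d = ∅ :=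
  vt_single_deletion_correcting_general n c d hc hd hcd
end

section
/- Let c and d be codewords of the Varshamov–Tenengolts code VT(n). If d can be obtained from c by a single deletion followed by a single insertion (i.e., there exists a binary string w of length n−1 with w ∈ D₋₁(c) and d ∈ D₊₁(w)), then d = c. -/
/-- `ins1 x`: the set of strings obtainable from `x` by inserting one bit. -/
def ins1 (x : List Bool) : Set (List Bool) :=
  {y | ∃ p ≤ x.length, ∃ b : Bool, y = x.take p ++ b :: x.drop p}

/-!
If `w` arises from `c` by deleting a bit, then `c` arises from `w` by reinserting it, so `c` and
`d` are both single-bit insertions into the same string `w` of length `n - 1`. Inserting the bit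
`b` at position `q` raises the checksum by `(q + 1)·b` plus the number of ones after position
`q`, a quantity between `0` and `n`; so for codewords of `VT(n)` the two increments agree. For
positions `p ≤ q` equal increments force the inserted bits to agree and the bits of `w` between
`p` and `q` to be a run of that same bit, and inserting a bit at either end of a run of equal
bits gives the same string.
-/

def insertWeight (w : List Bool) (q : ℕ) (b : Bool) : ℕ :=
  (q + 1) * b.toNat + (w.drop q).count true

lemma sum_range_getD_toNat (t : List Bool) :
    ∑ i ∈ Finset.range t.length, (t.getD i false).toNat = t.count true := by
  induction t with
  | nil => simp
  | cons x t ih =>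
    rw [List.length_cons, Finset.sum_range_succ']
    simp only [List.getD_cons_succ, List.getD_cons_zero, ih, List.count_cons]
    cases x <;> simp

lemma checksum_cons_s3 (x : Bool) (t : List Bool) :
    checksum (x :: t) = x.toNat + checksum t + t.count true := by
  unfold checksum
  rw [List.length_cons, Finset.sum_range_succ']
  simp only [List.getD_cons_succ, List.getD_cons_zero, add_mul, one_mul,
    Finset.sum_add_distrib, sum_range_getD_toNat]
  ring

lemma checksum_append (u v : List Bool) :
    checksum (u ++ v) = checksum u + checksum v + u.length * v.count true := by
  induction u with
  | nil => simp [checksum]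
  | cons x u ih =>
    simp only [List.cons_append, checksum_cons_s3, ih, List.count_append, List.length_cons]
    ring

lemma checksum_insert {w : List Bool} {q : ℕ} (b : Bool) (hq : q ≤ w.length) :
    checksum (w.take q ++ b :: w.drop q) = checksum w + insertWeight w q b := by
  have hw := checksum_append (w.take q) (w.drop q)
  rw [List.take_append_drop, List.length_take_of_le hq] at hw
  rw [checksum_append, checksum_cons_s3, List.length_take_of_le hq, hw, insertWeight,
    List.count_cons]
  cases b <;>
    simp only [Bool.toNat_false, Bool.toNat_true, zero_add, add_zero, mul_zero, mul_one,
      beq_true, Bool.false_eq_true, BEq.rfl, ↓reduceIte] <;> ring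

lemma insertWeight_le {w : List Bool} {q : ℕ} (b : Bool) (hq : q ≤ w.length) :
    insertWeight w q b ≤ w.length + 1 := by
  have := (w.drop q).count_le_length (a := true)
  rw [List.length_drop] at this
  unfold insertWeight
  cases b <;> simp only [Bool.toNat_false, Bool.toNat_true, mul_zero, mul_one, zero_add] <;>
    omega

lemma insert_eq_insert_of_take_drop_eq_replicate {α : Type*} {w : List α} {p k : ℕ} {a : α}
    (hrun : (w.drop p).take k = List.replicate k a) :
    w.take p ++ a :: w.drop p = w.take (p + k) ++ a :: w.drop (p + k) := by
  rw [List.take_add, hrun, ← List.drop_drop]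
  conv_lhs => rw [← List.take_append_drop k (w.drop p), hrun]
  rw [List.append_assoc, ← List.cons_append, ← List.replicate_succ, List.replicate_succ',
    List.append_assoc, List.singleton_append]

lemma eq_and_take_drop_eq_replicate_of_insertWeight_eq {w : List Bool} {p q : ℕ} {a b : Bool}
    (hpq : p ≤ q) (hq : q ≤ w.length) (h : insertWeight w p a = insertWeight w q b) :
    a = b ∧ (w.drop p).take (q - p) = List.replicate (q - p) a := by
  set s := (w.drop p).take (q - p)
  have hs_len : s.length = q - p := by simp only [s, List.length_take, List.length_drop]; omega
  have hsplit : (w.drop p).count true = s.count true + (w.drop q).count true := by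
    have hdrop : w.drop q = (w.drop p).drop (q - p) := by
      rw [List.drop_drop, Nat.add_sub_cancel' hpq]
    rw [hdrop, ← List.count_append, List.take_append_drop]
  have hs_count := s.count_true_add_count_false
  have hrun : a = b ∧ s.count a = s.length := by
    unfold insertWeight at h
    cases a <;> cases b <;>
      simp only [Bool.toNat_false, Bool.toNat_true, mul_zero, mul_one, zero_add,
        Bool.false_eq_true, Bool.true_eq_false, true_and, false_and] at h ⊢ <;> omega
  exact ⟨hrun.1, List.eq_replicate_iff.mpr
    ⟨hs_len, fun x hx => (List.count_eq_length.mp hrun.2 x hx).symm⟩⟩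

lemma insert_eq_of_insertWeight_eq {w : List Bool} {p q : ℕ} {a b : Bool}
    (hpq : p ≤ q) (hq : q ≤ w.length) (h : insertWeight w p a = insertWeight w q b) :
    w.take p ++ a :: w.drop p = w.take q ++ b :: w.drop q := by
  obtain ⟨rfl, hrun⟩ := eq_and_take_drop_eq_replicate_of_insertWeight_eq hpq hq h
  rw [insert_eq_insert_of_take_drop_eq_replicate hrun, Nat.add_sub_cancel' hpq]

lemma mem_ins1_of_mem_del1 {x w : List Bool} (h : w ∈ del1 x) : x ∈ ins1 w := by
  obtain ⟨p, hp, rfl⟩ := h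
  have hlen : (x.take p).length = p := List.length_take_of_le hp.le
  refine ⟨p, by simp [hlen], x[p], ?_⟩
  rw [List.take_left' hlen, List.drop_left' hlen, ← List.drop_eq_getElem_cons hp,
    List.take_append_drop]

lemma length_of_mem_ins1 {c w : List Bool} (h : c ∈ ins1 w) : c.length = w.length + 1 := by
  obtain ⟨p, hp, b, rfl⟩ := h
  simp only [List.length_append, List.length_cons, List.length_take_of_le hp, List.length_drop]
  omega

lemma eq_of_mem_ins1_of_checksum_modEq {c d w : List Bool} (hc : c ∈ ins1 w) (hd : d ∈ ins1 w)
    (h : checksum c ≡ checksum d [MOD w.length + 2]) : c = d := by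
  obtain ⟨p, hp, a, rfl⟩ := hc
  obtain ⟨q, hq, b, rfl⟩ := hd
  rw [checksum_insert a hp, checksum_insert b hq] at h
  have hweight : insertWeight w p a = insertWeight w q b :=
    (Nat.ModEq.add_left_cancel' _ h).eq_of_lt_of_lt
      (Nat.lt_succ_of_le (insertWeight_le a hp)) (Nat.lt_succ_of_le (insertWeight_le b hq))
  rcases le_total p q with hpq | hqp
  · exact insert_eq_of_insertWeight_eq hpq hq hweight
  · exact (insert_eq_of_insertWeight_eq hqp hp hweight.symm).symm

/-- If a VT(n) codeword `d` is obtained from a VT(n) codeword `c` by a single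
deletion followed by a single insertion, then `d = c`. -/
theorem vt_del_then_ins (n : ℕ) (c d : List Bool)
    (hc : c ∈ VT n) (hd : d ∈ VT n)
    (w : List Bool) (hwc : w ∈ del1 c) (hdw : d ∈ ins1 w) :
    d = c := by
  have hcw : c ∈ ins1 w := mem_ins1_of_mem_del1 hwc
  have hlen : w.length + 2 = n + 1 := by rw [← hc.1, length_of_mem_ins1 hcw]
  refine eq_of_mem_ins1_of_checksum_modEq hdw hcw ?_
  rw [hlen]
  exact (Nat.modEq_zero_iff_dvd.mpr hd.2).trans (Nat.modEq_zero_iff_dvd.mpr hc.2).symm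
end

section
/- (Correctness of the systematic VT encoder.) Let ℓ ≥ 1 and n = 2^ℓ. The positions in {1,…,n} that are powers of two are exactly 2^0, 2^1, …, 2^ℓ; call the remaining positions the data positions. For every assignment d of bits to the data positions, there exists exactly one integer s with 0 ≤ s ≤ n such that the binary string c of length n defined by c_i = d(i) for each data position i and c_{2^j} = (⌊s/2^j⌋ mod 2) for each 0 ≤ j ≤ ℓ (the binary expansion of s placed at the power-of-two positions, least significant bit at position 1) satisfies Σ_{i=1}^n i·c_i ≡ 0 (mod n+1), i.e., c ∈ VT(n). -/
/-- The systematic VT encoder with `n = 2^ℓ`: the binary string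
`c = (c_1, …, c_n)` whose bit at each (1-indexed) position that is a power of
two, say `2^j`, is the `j`-th bit `⌊s/2^j⌋ mod 2` of the binary expansion of
`s` (least significant bit at position `1`), and whose bit at every other
(data) position `i` is the data bit `d i`. -/
def sysEncode (ℓ : ℕ) (d : ℕ → Bool) (s : ℕ) : List Bool :=
  List.ofFn (fun i : Fin (2 ^ ℓ) =>
    if 2 ^ Nat.log2 ((i : ℕ) + 1) = (i : ℕ) + 1 then
      s.testBit (Nat.log2 ((i : ℕ) + 1))
    else d ((i : ℕ) + 1))

/-!
The bits of `s` sit at the positions `2^j`, so they contribute `Σ_{j ≤ ℓ} 2^j·s_j = s mod 2^(ℓ+1)`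
to the checksum, which is just `s` when `s ≤ 2^ℓ`. The checksum is therefore `s + D`, where `D`
is the contribution of the data bits, and `s = (-D) mod (2^ℓ + 1)` is the only admissible choice.
-/

open Finset

lemma Nat.sum_range_two_pow_mul_testBit (s k : ℕ) :
    ∑ j ∈ range k, 2 ^ j * (s.testBit j).toNat = s % 2 ^ k := by
  induction k with
  | zero => simp [Nat.mod_one]
  | succ k ih =>
    rw [sum_range_succ, ih, pow_succ, Nat.mod_mul, Nat.testBit_eq_decide_div_mod_eq]
    rcases Nat.mod_two_eq_zero_or_one (s / 2 ^ k) with h | h <;> simp [h]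

/-- `i` is the 0-based index of a power-of-two position `i + 1`. -/
abbrev IsPowTwoIndex (i : ℕ) : Prop := 2 ^ Nat.log2 (i + 1) = i + 1

lemma sum_filter_isPowTwoIndex (ℓ : ℕ) {M : Type*} [AddCommMonoid M] (f : ℕ → M) :
    ∑ i ∈ (range (2 ^ ℓ)).filter IsPowTwoIndex, f i = ∑ j ∈ range (ℓ + 1), f (2 ^ j - 1) := by
  have hsub : ∀ j, 2 ^ j - 1 + 1 = 2 ^ j := fun j => Nat.sub_add_cancel Nat.one_le_two_pow
  refine sum_nbij' (fun i => Nat.log2 (i + 1)) (fun j => 2 ^ j - 1) ?_ ?_ ?_ ?_ ?_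
  · intro i hi
    rw [mem_filter, mem_range] at hi
    have : 2 ^ Nat.log2 (i + 1) < 2 ^ (ℓ + 1) := by rw [pow_succ, hi.2]; omega
    exact mem_range.2 ((Nat.pow_lt_pow_iff_right (by norm_num)).mp this)
  · intro j hj
    have : 2 ^ j ≤ 2 ^ ℓ := Nat.pow_le_pow_right (by norm_num) (by simpa [Nat.lt_succ_iff] using hj)
    rw [mem_filter, mem_range, IsPowTwoIndex, hsub, Nat.log2_two_pow]
    exact ⟨(Nat.sub_lt (Nat.two_pow_pos j) one_pos).trans_le this, rfl⟩
  · intro i hi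
    rw [(mem_filter.1 hi).2, Nat.add_sub_cancel]
  · intro j _
    rw [hsub, Nat.log2_two_pow]
  · intro i hi
    rw [(mem_filter.1 hi).2, Nat.add_sub_cancel]

def dataChecksum (ℓ : ℕ) (d : ℕ → Bool) : ℕ :=
  ∑ i ∈ (range (2 ^ ℓ)).filter (¬ IsPowTwoIndex ·), (i + 1) * (d (i + 1)).toNat

lemma length_sysEncode (ℓ : ℕ) (d : ℕ → Bool) (s : ℕ) : (sysEncode ℓ d s).length = 2 ^ ℓ := by
  simp [sysEncode]

lemma checksum_sysEncode (ℓ : ℕ) (d : ℕ → Bool) (s : ℕ) :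
    checksum (sysEncode ℓ d s) = s % 2 ^ (ℓ + 1) + dataChecksum ℓ d := by
  have hentry : ∀ i ∈ range (2 ^ ℓ), (i + 1) * ((sysEncode ℓ d s).getD i false).toNat =
      if IsPowTwoIndex i then (i + 1) * (s.testBit (Nat.log2 (i + 1))).toNat
      else (i + 1) * (d (i + 1)).toNat := by
    intro i hi
    rw [List.getD_eq_getElem _ _ (by simpa [length_sysEncode] using hi)]
    simp [sysEncode, IsPowTwoIndex, apply_ite Bool.toNat]
  rw [checksum, length_sysEncode, sum_congr rfl hentry, sum_ite, dataChecksum,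
    sum_filter_isPowTwoIndex, ← Nat.sum_range_two_pow_mul_testBit]
  congr 1
  refine sum_congr rfl fun j _ => ?_
  rw [Nat.sub_add_cancel Nat.one_le_two_pow, Nat.log2_two_pow]

lemma sysEncode_mem_VT_iff {ℓ s : ℕ} (d : ℕ → Bool) (hs : s ≤ 2 ^ ℓ) :
    sysEncode ℓ d s ∈ VT (2 ^ ℓ) ↔ 2 ^ ℓ + 1 ∣ s + dataChecksum ℓ d := by
  have : s < 2 ^ (ℓ + 1) := hs.trans_lt (Nat.pow_lt_pow_succ (by norm_num))
  simp [VT, length_sysEncode, checksum_sysEncode, Nat.mod_eq_of_lt this]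

lemma Nat.lt_and_dvd_add_iff_eq_val_neg {N : ℕ} [NeZero N] (D s : ℕ) :
    s < N ∧ N ∣ s + D ↔ s = (-(D : ZMod N)).val := by
  rw [← ZMod.natCast_eq_zero_iff, Nat.cast_add, add_eq_zero_iff_eq_neg]
  constructor
  · rintro ⟨hs, h⟩
    rw [← h, ZMod.val_natCast_of_lt hs]
  · rintro rfl
    exact ⟨ZMod.val_lt _, ZMod.natCast_zmod_val _⟩

theorem sysEncode_exists_unique_general (ℓ : ℕ) (d : ℕ → Bool) :
    ∃! s : ℕ, s ≤ 2 ^ ℓ ∧ sysEncode ℓ d s ∈ VT (2 ^ ℓ) := by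
  have hiff : ∀ s, s ≤ 2 ^ ℓ ∧ sysEncode ℓ d s ∈ VT (2 ^ ℓ) ↔
      s < 2 ^ ℓ + 1 ∧ 2 ^ ℓ + 1 ∣ s + dataChecksum ℓ d := fun s => by
    rw [Nat.lt_succ_iff]
    exact and_congr_right (sysEncode_mem_VT_iff d)
  simp only [hiff, Nat.lt_and_dvd_add_iff_eq_val_neg, existsUnique_eq]

/-- Correctness of the systematic VT encoder: for every assignment `d` of bits
to the data positions there is exactly one `s` with `0 ≤ s ≤ n = 2^ℓ` such that
the resulting string is a codeword of `VT(n)`. -/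
theorem sysEncode_exists_unique (ℓ : ℕ) (hℓ : 1 ≤ ℓ) (d : ℕ → Bool) :
    ∃! s : ℕ, s ≤ 2 ^ ℓ ∧ sysEncode ℓ d s ∈ VT (2 ^ ℓ) :=
  sysEncode_exists_unique_general ℓ d
end

section
/- For every ℓ ≥ 1 and n = 2^ℓ, the Varshamov–Tenengolts code VT(n) contains at least 2^{n − ℓ − 1} codewords, i.e., |VT(2^ℓ)| ≥ 2^{2^ℓ − ℓ − 1}. -/
/-!
Write a binary word of length `n` as the set of its `1`-positions in `{1, …, n}`, so that its
checksum is the sum of that set. The `k` positions `1, 2, 4, …, 2^(k-1)` are check positions: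
when `n + 1 ≤ 2^k`, every residue `r` modulo `n + 1` is the sum of a set of check positions
(the binary expansion of `r`). Hence any choice of the remaining `n - k` free positions extends
uniquely to a codeword of `VT(n)`, giving `|VT(n)| ≥ 2^(n-k)`. For `n = 2^ℓ` take `k = ℓ + 1`.
-/

open Finset

def indicatorWord (n : ℕ) (s : Finset ℕ) : List Bool :=
  (List.range n).map fun i => decide (i + 1 ∈ s)

@[simp] lemma length_indicatorWord (n : ℕ) (s : Finset ℕ) : (indicatorWord n s).length = n := by
  simp [indicatorWord]

lemma getD_indicatorWord {n i : ℕ} (hi : i < n) (s : Finset ℕ) :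
    (indicatorWord n s).getD i false = decide (i + 1 ∈ s) := by
  simp [indicatorWord, hi]

lemma checksum_indicatorWord {n : ℕ} {s : Finset ℕ} (hs : s ⊆ Icc 1 n) :
    checksum (indicatorWord n s) = ∑ i ∈ s, i := by
  calc checksum (indicatorWord n s) = ∑ i ∈ range n, if i + 1 ∈ s then i + 1 else 0 := by
        rw [checksum, length_indicatorWord]
        refine sum_congr rfl fun i hi => ?_
        rw [getD_indicatorWord (mem_range.mp hi)]
        split_ifs <;> simp [*]
    _ = ∑ i ∈ Icc 1 n, if i ∈ s then i else 0 := by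
        rw [range_eq_Ico, sum_Ico_add' (fun i => if i ∈ s then i else 0)]
        rfl
    _ = ∑ i ∈ s, i := by rw [sum_ite_mem, inter_eq_right.mpr hs]

lemma injOn_indicatorWord (n : ℕ) : Set.InjOn (indicatorWord n) {s | s ⊆ Icc 1 n} := by
  intro s hs t ht hst
  have key (i : ℕ) (hi : i < n) : i + 1 ∈ s ↔ i + 1 ∈ t := by
    simpa only [getD_indicatorWord hi, decide_eq_decide] using congrArg (·.getD i false) hst
  ext m
  by_cases hm : m ∈ Icc 1 n
  · obtain ⟨h1, h2⟩ := mem_Icc.mp hm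
    simpa [Nat.sub_add_cancel h1] using key (m - 1) (by omega)
  · exact iff_of_false (fun h => hm (hs h)) (fun h => hm (ht h))

def twoPows (k : ℕ) : Finset ℕ := (range k).image (2 ^ ·)

lemma card_twoPows (k : ℕ) : #(twoPows k) = k := by
  rw [twoPows, card_image_of_injective _ (Nat.pow_right_injective le_rfl), card_range]

lemma twoPows_subset_Icc {n k : ℕ} (hk : 2 ^ k ≤ 2 * n) : twoPows k ⊆ Icc 1 n := by
  intro m hm
  obtain ⟨j, hj, rfl⟩ := mem_image.mp hm
  have : 2 ^ (j + 1) ≤ 2 ^ k := Nat.pow_le_pow_right (by norm_num) (mem_range.mp hj)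
  exact mem_Icc.mpr ⟨Nat.one_le_two_pow, by rw [pow_succ] at this; omega⟩

def binaryPowers (r : ℕ) : Finset ℕ := r.bitIndices.toFinset.image (2 ^ ·)

lemma sum_binaryPowers (r : ℕ) : ∑ i ∈ binaryPowers r, i = r := by
  rw [binaryPowers, sum_image fun a _ b _ h => Nat.pow_right_injective le_rfl h]
  exact sum_toFinset_bitIndices_two_pow r

lemma binaryPowers_subset_twoPows {r k : ℕ} (hr : r < 2 ^ k) : binaryPowers r ⊆ twoPows k := by
  refine image_subset_image fun i hi => ?_
  have := Nat.two_pow_le_of_mem_bitIndices (List.mem_toFinset.mp hi)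
  exact mem_range.mpr ((Nat.pow_lt_pow_iff_right (by norm_num)).mp (this.trans_lt hr))

def vtEncode (n : ℕ) (A : Finset ℕ) : Finset ℕ :=
  A ∪ binaryPowers (-((∑ i ∈ A, i : ℕ) : ZMod (n + 1))).val

section vtEncode

variable {n k : ℕ} {A : Finset ℕ} (hk : n + 1 ≤ 2 ^ k) (hA : Disjoint A (twoPows k))
include hk

lemma binaryPowers_val_subset_twoPows (r : ZMod (n + 1)) : binaryPowers r.val ⊆ twoPows k :=
  binaryPowers_subset_twoPows (r.val_lt.trans_le hk)

include hA

lemma dvd_sum_vtEncode : n + 1 ∣ ∑ i ∈ vtEncode n A, i := by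
  rw [vtEncode, sum_union (hA.mono_right (binaryPowers_val_subset_twoPows hk _)), sum_binaryPowers,
    ← ZMod.natCast_eq_zero_iff]
  push_cast
  simp

lemma vtEncode_sdiff_twoPows : vtEncode n A \ twoPows k = A := by
  rw [vtEncode, union_sdiff_distrib, hA.sdiff_eq_left,
    sdiff_eq_empty_iff_subset.mpr (binaryPowers_val_subset_twoPows hk _), union_empty]

end vtEncode

theorem two_pow_sub_le_ncard_VT {n k : ℕ} (hk : n + 1 ≤ 2 ^ k) (hkn : 2 ^ k ≤ 2 * n) :
    2 ^ (n - k) ≤ (VT n).ncard := by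
  have hfin : (VT n).Finite := (List.finite_length_eq Bool n).subset fun _ hc => hc.1
  have hcard : #((Icc 1 n \ twoPows k).powerset) = 2 ^ (n - k) := by
    rw [card_powerset, card_sdiff_of_subset (twoPows_subset_Icc hkn), card_twoPows, Nat.card_Icc,
      Nat.add_sub_cancel]
  have hfree {A} (hA : A ∈ (Icc 1 n \ twoPows k).powerset) :
      A ⊆ Icc 1 n ∧ Disjoint A (twoPows k) :=
    subset_sdiff.mp (mem_powerset.mp hA)
  have hsub {A} (hA : A ∈ (Icc 1 n \ twoPows k).powerset) : vtEncode n A ⊆ Icc 1 n :=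
    union_subset (hfree hA).1
      ((binaryPowers_val_subset_twoPows hk _).trans (twoPows_subset_Icc hkn))
  rw [← hcard, ← Set.ncard_coe_finset]
  refine Set.ncard_le_ncard_of_injOn (indicatorWord n ∘ vtEncode n) ?_ ?_ hfin
  · intro A hA
    exact ⟨length_indicatorWord n _,
      checksum_indicatorWord (hsub hA) ▸ dvd_sum_vtEncode hk (hfree hA).2⟩
  · intro A hA B hB hAB
    rw [← vtEncode_sdiff_twoPows hk (hfree hA).2, ← vtEncode_sdiff_twoPows hk (hfree hB).2,
      injOn_indicatorWord n (hsub hA) (hsub hB) hAB]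

theorem vt_card_lower_bound_general (ℓ : ℕ) :
    2 ^ (2 ^ ℓ - ℓ - 1) ≤ (VT (2 ^ ℓ)).ncard := by
  have hk : 2 ^ ℓ + 1 ≤ 2 ^ (ℓ + 1) := by
    have := @Nat.one_le_two_pow ℓ
    rw [pow_succ]
    omega
  rw [Nat.sub_sub]
  exact two_pow_sub_le_ncard_VT hk (by rw [pow_succ, mul_comm])

/-- For every `ℓ ≥ 1` and `n = 2^ℓ`, the code `VT(n)` has at least
`2^(n − ℓ − 1)` codewords. -/
theorem vt_card_lower_bound (ℓ : ℕ) (hℓ : 1 ≤ ℓ) :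
    2 ^ (2 ^ ℓ - ℓ - 1) ≤ (VT (2 ^ ℓ)).ncard :=
  vt_card_lower_bound_general ℓ
end
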